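/- arXiv:1809.06234 — 2 statements merged into one kernel-verified Lean document; each statement's English description precedes it below -/
import Mathlib

section
/- Let α₁, α₂ > 0, let Δt > 0, t_j = jΔt, and m ∈ ℕ with m ≥ 1. Then Δt · Σ_{j=1}^m t_{m-j+1}^{-1+α₁} t_j^{-1+α₂} ≤ C_{α₁,α₂} t_m^{-1+α₁+α₂}, where C_{α₁,α₂} depends only on α₁ and α₂. -/
/-!
Scaling every time by `Δt` reduces the claim to the discrete Beta bound
`∑_{j=1}^m (m-j+1)^(a-1) j^(b-1) ≤ C m^(a+b-1)`. In each term one of `m-j+1`, `j` is at least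
`m/2`, so its power is comparable to the corresponding power of `m`; the remaining factor sums to
`O(m^a)` resp. `O(m^b)`, by telescoping `j^b - (j-1)^b ≥ b j^(b-1)` when `b ≤ 1` and by the trivial
bound `j^(b-1) ≤ m^(b-1)` when `b > 1`.
-/

open Real Finset

lemma mul_rpow_sub_one_le_rpow_sub_rpow {b x : ℝ} (hb₀ : 0 < b) (hb₁ : b ≤ 1) (hx : 1 ≤ x) :
    b * x ^ (b - 1) ≤ x ^ b - (x - 1) ^ b := by
  have hx₀ : 0 < x := by linarith
  have bernoulli := rpow_one_add_le_one_add_mul_self (s := -x⁻¹)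
    (by linarith [inv_le_one_of_one_le₀ hx]) hb₀.le hb₁
  have hbase : 1 + -x⁻¹ = (x - 1) / x := by field_simp; ring
  rw [hbase, div_rpow (by linarith) hx₀.le, div_le_iff₀ (rpow_pos_of_pos hx₀ b)] at bernoulli
  have hexpand : (1 + b * -x⁻¹) * x ^ b = x ^ b - b * x ^ (b - 1) := by
    rw [rpow_sub_one hx₀.ne']
    ring
  linarith

lemma sum_Icc_rpow_sub_one_le_of_le_one {b : ℝ} (hb₀ : 0 < b) (hb₁ : b ≤ 1) (m : ℕ) :
    ∑ j ∈ Icc 1 m, (j : ℝ) ^ (b - 1) ≤ (m : ℝ) ^ b / b := by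
  induction m with
  | zero => simp [zero_rpow hb₀.ne']
  | succ k ih =>
    rw [sum_Icc_succ_top (by omega), le_div_iff₀ hb₀, add_mul]
    have hstep := mul_rpow_sub_one_le_rpow_sub_rpow hb₀ hb₁ (x := (k + 1 : ℕ))
      (by exact_mod_cast Nat.le_add_left 1 k)
    rw [le_div_iff₀ hb₀] at ih
    push_cast at hstep ⊢
    rw [add_sub_cancel_right] at hstep
    linarith

lemma sum_Icc_rpow_sub_one_le {b : ℝ} (hb : 0 < b) (m : ℕ) :
    ∑ j ∈ Icc 1 m, (j : ℝ) ^ (b - 1) ≤ (1 + b⁻¹) * (m : ℝ) ^ b := by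
  have hmb : 0 ≤ (m : ℝ) ^ b := rpow_nonneg m.cast_nonneg b
  rcases le_or_gt b 1 with hb₁ | hb₁
  · calc ∑ j ∈ Icc 1 m, (j : ℝ) ^ (b - 1) ≤ (m : ℝ) ^ b / b :=
          sum_Icc_rpow_sub_one_le_of_le_one hb hb₁ m
      _ ≤ (1 + b⁻¹) * (m : ℝ) ^ b := by rw [div_eq_inv_mul]; nlinarith
  · calc ∑ j ∈ Icc 1 m, (j : ℝ) ^ (b - 1) ≤ ∑ _j ∈ Icc 1 m, (m : ℝ) ^ (b - 1) := by
          refine sum_le_sum fun j hj => rpow_le_rpow j.cast_nonneg ?_ (by linarith)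
          exact_mod_cast (mem_Icc.mp hj).2
      _ = (m : ℝ) ^ b := by
          rw [sum_const, Nat.card_Icc, nsmul_eq_mul, add_tsub_cancel_right,
            ← rpow_one_add' m.cast_nonneg (by linarith), add_sub_cancel]
      _ ≤ (1 + b⁻¹) * (m : ℝ) ^ b := by nlinarith [inv_pos.mpr hb]

lemma rpow_le_max_mul_rpow_of_le_two_mul {x y : ℝ} (p : ℝ) (hx : 0 < x) (hxy : x ≤ y)
    (hyx : y ≤ 2 * x) : x ^ p ≤ max 1 (2 ^ (-p)) * y ^ p := by
  have hy : 0 < y := hx.trans_le hxy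
  have hyp : 0 ≤ y ^ p := rpow_nonneg hy.le p
  rcases le_or_gt 0 p with hp | hp
  · calc x ^ p ≤ y ^ p := rpow_le_rpow hx.le hxy hp
      _ ≤ max 1 (2 ^ (-p)) * y ^ p := le_mul_of_one_le_left hyp (le_max_left _ _)
  · calc x ^ p ≤ (y / 2) ^ p := rpow_le_rpow_of_nonpos (by positivity) (by linarith) hp.le
      _ = 2 ^ (-p) * y ^ p := by
          rw [div_rpow hy.le zero_le_two, rpow_neg zero_le_two, div_eq_inv_mul]
      _ ≤ max 1 (2 ^ (-p)) * y ^ p := mul_le_mul_of_nonneg_right (le_max_right _ _) hyp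

lemma sum_Icc_one_reflect (f : ℕ → ℝ) (m : ℕ) :
    ∑ j ∈ Icc 1 m, f (m - j + 1) = ∑ j ∈ Icc 1 m, f j :=
  sum_nbij' (fun j => m - j + 1) (fun j => m - j + 1)
    (fun j hj => by simp only [mem_Icc] at *; omega)
    (fun j hj => by simp only [mem_Icc] at *; omega)
    (fun j hj => by simp only [mem_Icc] at hj; omega)
    (fun j hj => by simp only [mem_Icc] at hj; omega)
    (fun _ _ => rfl)

noncomputable def discreteBetaConst (a b : ℝ) : ℝ :=
  max 1 (2 ^ (1 - a)) * (1 + b⁻¹) + max 1 (2 ^ (1 - b)) * (1 + a⁻¹)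

lemma discreteBetaConst_pos {a b : ℝ} (ha : 0 < a) (hb : 0 < b) : 0 < discreteBetaConst a b := by
  unfold discreteBetaConst
  positivity

lemma sum_Icc_rpow_mul_rpow_le {a b : ℝ} (ha : 0 < a) (hb : 0 < b) {m : ℕ} (hm : 0 < m) :
    ∑ j ∈ Icc 1 m, ((m - j + 1 : ℕ) : ℝ) ^ (a - 1) * (j : ℝ) ^ (b - 1)
      ≤ discreteBetaConst a b * (m : ℝ) ^ (a + b - 1) := by
  set c₁ : ℝ := max 1 (2 ^ (1 - a))
  set c₂ : ℝ := max 1 (2 ^ (1 - b))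
  have pointwise : ∀ j ∈ Icc 1 m,
      ((m - j + 1 : ℕ) : ℝ) ^ (a - 1) * (j : ℝ) ^ (b - 1)
        ≤ c₁ * (m : ℝ) ^ (a - 1) * (j : ℝ) ^ (b - 1)
          + c₂ * (m : ℝ) ^ (b - 1) * ((m - j + 1 : ℕ) : ℝ) ^ (a - 1) := by
    intro j hj
    obtain ⟨hj₁, hjm⟩ := mem_Icc.mp hj
    have hfirst : 0 ≤ ((m - j + 1 : ℕ) : ℝ) ^ (a - 1) := by positivity
    have hsecond : 0 ≤ (j : ℝ) ^ (b - 1) := by positivity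
    rcases le_or_gt (2 * j) m with hcase | hcase
    · have hbound : ((m - j + 1 : ℕ) : ℝ) ^ (a - 1) ≤ c₁ * (m : ℝ) ^ (a - 1) := by
        simpa only [neg_sub] using rpow_le_max_mul_rpow_of_le_two_mul (a - 1) (by positivity)
          (by exact_mod_cast (by omega : m - j + 1 ≤ m))
          (by exact_mod_cast (by omega : m ≤ 2 * (m - j + 1)))
      have hrest : 0 ≤ c₂ * (m : ℝ) ^ (b - 1) * ((m - j + 1 : ℕ) : ℝ) ^ (a - 1) := by positivity
      linarith [mul_le_mul_of_nonneg_right hbound hsecond]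
    · have hbound : (j : ℝ) ^ (b - 1) ≤ c₂ * (m : ℝ) ^ (b - 1) := by
        simpa only [neg_sub] using rpow_le_max_mul_rpow_of_le_two_mul (b - 1) (by positivity)
          (by exact_mod_cast hjm) (by exact_mod_cast hcase.le)
      have hrest : 0 ≤ c₁ * (m : ℝ) ^ (a - 1) * (j : ℝ) ^ (b - 1) := by positivity
      linarith [mul_le_mul_of_nonneg_left hbound hfirst]
  have hm₀ : 0 < (m : ℝ) := by exact_mod_cast hm
  calc ∑ j ∈ Icc 1 m, ((m - j + 1 : ℕ) : ℝ) ^ (a - 1) * (j : ℝ) ^ (b - 1)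
      ≤ c₁ * (m : ℝ) ^ (a - 1) * ∑ j ∈ Icc 1 m, (j : ℝ) ^ (b - 1)
        + c₂ * (m : ℝ) ^ (b - 1) * ∑ j ∈ Icc 1 m, (j : ℝ) ^ (a - 1) := by
        rw [mul_sum, mul_sum, ← sum_Icc_one_reflect (fun j => c₂ * (m : ℝ) ^ (b - 1) * (j : ℝ) ^ (a - 1)),
          ← sum_add_distrib]
        exact sum_le_sum pointwise
    _ ≤ c₁ * (m : ℝ) ^ (a - 1) * ((1 + b⁻¹) * (m : ℝ) ^ b)
        + c₂ * (m : ℝ) ^ (b - 1) * ((1 + a⁻¹) * (m : ℝ) ^ a) := by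
        gcongr
        · exact sum_Icc_rpow_sub_one_le hb m
        · exact sum_Icc_rpow_sub_one_le ha m
    _ = discreteBetaConst a b * (m : ℝ) ^ (a + b - 1) := by
        have hab : (m : ℝ) ^ (a - 1) * (m : ℝ) ^ b = (m : ℝ) ^ (a + b - 1) := by
          rw [← rpow_add hm₀]; ring_nf
        have hba : (m : ℝ) ^ (b - 1) * (m : ℝ) ^ a = (m : ℝ) ^ (a + b - 1) := by
          rw [← rpow_add hm₀]; ring_nf
        rw [discreteBetaConst]
        linear_combination (c₁ * (1 + b⁻¹)) * hab + (c₂ * (1 + a⁻¹)) * hba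

theorem stmt_4 (α₁ α₂ : ℝ) (h1 : 0 < α₁) (h2 : 0 < α₂) :
    ∃ C : ℝ, 0 < C ∧ ∀ (Δt : ℝ) (m : ℕ), 0 < Δt → 1 ≤ m →
      Δt * ∑ j ∈ Finset.Icc 1 m,
        (((m - j + 1 : ℕ) : ℝ) * Δt) ^ (-1 + α₁) * (((j : ℕ) : ℝ) * Δt) ^ (-1 + α₂)
      ≤ C * ((m : ℝ) * Δt) ^ (-1 + α₁ + α₂) := by
  refine ⟨discreteBetaConst α₁ α₂, discreteBetaConst_pos h1 h2, fun Δt m hΔt hm => ?_⟩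
  have hscale : Δt * Δt ^ (α₁ - 1) * Δt ^ (α₂ - 1) = Δt ^ (α₁ + α₂ - 1) := by
    rw [← rpow_one_add' hΔt.le (by linarith), ← rpow_add hΔt]
    ring_nf
  simp only [neg_add_eq_sub, mul_rpow (Nat.cast_nonneg _) hΔt.le]
  calc Δt * ∑ j ∈ Icc 1 m, ((m - j + 1 : ℕ) : ℝ) ^ (α₁ - 1) * Δt ^ (α₁ - 1)
          * ((j : ℝ) ^ (α₂ - 1) * Δt ^ (α₂ - 1))
      = (∑ j ∈ Icc 1 m, ((m - j + 1 : ℕ) : ℝ) ^ (α₁ - 1) * (j : ℝ) ^ (α₂ - 1))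
          * Δt ^ (α₁ + α₂ - 1) := by
        rw [← hscale, mul_sum, sum_mul]
        exact sum_congr rfl fun j _ => by ring
    _ ≤ discreteBetaConst α₁ α₂ * (m : ℝ) ^ (α₁ + α₂ - 1) * Δt ^ (α₁ + α₂ - 1) := by
        gcongr
        exact sum_Icc_rpow_mul_rpow_le h1 h2 hm
    _ = discreteBetaConst α₁ α₂ * ((m : ℝ) ^ (α₁ - 1 + α₂) * Δt ^ (α₁ - 1 + α₂)) := by
        rw [sub_add_eq_add_sub]; ring
end

section
/- Let A be a self-adjoint negative-definite operator on a finite-dimensional inner product space, with eigenvalues -λ₁, …, -λ_N where λ_n > 0, and let ρ ∈ [0,1]. Then for 0 ≤ τ₁ ≤ τ₂, ∫_{τ₁}^{τ₂} ‖(-A)^{ρ/2} e^{(τ₂-r)A} x‖² dr ≤ C (τ₂-τ₁)^{1-ρ} ‖x‖² for all x, where C depends only on ρ. -/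
/-! In the eigenbasis the integrand is `∑ₙ λₙ^ρ e^{-2λₙ(τ₂-r)} ⟪bₙ, x⟫²`, so by Parseval it
suffices to bound each scalar integral `λ^ρ (1 - e^{-2λT}) / (2λ)`, `T = τ₂ - τ₁`, by `T^{1-ρ}`.
This follows from `1 - e^{-s} ≤ min s 1 ≤ s^{1-ρ}` and `λ^ρ ≤ (2λ)^ρ`, giving `C = 1`. -/

open Real Finset intervalIntegral RealInnerProductSpace

/-- The operator on a finite-dimensional inner product space acting diagonally
with coefficients `g n` in the orthonormal basis `b`. For a self-adjoint
negative-definite `A` with eigenpairs `(-lam n, b n)`, the operator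
`(-A)^{ρ/2} e^{tA}` acts spectrally as `specOp b (fun n => lam n ^ (ρ/2) * exp (-t * lam n))`. -/
noncomputable def specOp {N : ℕ} {E : Type*} [NormedAddCommGroup E]
    [InnerProductSpace ℝ E] (b : OrthonormalBasis (Fin N) ℝ E)
    (g : Fin N → ℝ) (x : E) : E :=
  ∑ n, (g n * ⟪b n, x⟫) • b n

theorem norm_specOp_sq {N : ℕ} {E : Type*} [NormedAddCommGroup E] [InnerProductSpace ℝ E]
    (b : OrthonormalBasis (Fin N) ℝ E) (g : Fin N → ℝ) (x : E) :
    ‖specOp b g x‖ ^ 2 = ∑ n, (g n * ⟪b n, x⟫) ^ 2 := by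
  rw [specOp, b.sum_repr_symm (WithLp.toLp 2 fun n => g n * ⟪b n, x⟫), b.repr.symm.norm_map,
    EuclideanSpace.norm_sq_eq]
  simp only [Real.norm_eq_abs, sq_abs]

theorem integral_norm_specOp_sq_le {N : ℕ} {E : Type*} [NormedAddCommGroup E]
    [InnerProductSpace ℝ E] (b : OrthonormalBasis (Fin N) ℝ E) {g : ℝ → Fin N → ℝ}
    (hg : ∀ n, Continuous fun r => g r n) {M τ₁ τ₂ : ℝ}
    (hM : ∀ n, ∫ r in τ₁..τ₂, g r n ^ 2 ≤ M) (x : E) :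
    ∫ r in τ₁..τ₂, ‖specOp b (g r) x‖ ^ 2 ≤ M * ‖x‖ ^ 2 := by
  simp_rw [norm_specOp_sq, mul_pow]
  rw [integral_finsetSum, ← b.sum_sq_inner_right x, Finset.mul_sum]
  · gcongr with n
    rw [integral_mul_const]
    exact mul_le_mul_of_nonneg_right (hM n) (sq_nonneg _)
  · exact fun n _ => (((hg n).pow 2).mul continuous_const).intervalIntegrable _ _

theorem one_sub_exp_neg_le_rpow {s ρ : ℝ} (hs : 0 ≤ s) (hρ0 : 0 ≤ ρ) (hρ1 : ρ ≤ 1) :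
    1 - exp (-s) ≤ s ^ (1 - ρ) := by
  rcases le_total s 1 with hs1 | hs1
  · calc 1 - exp (-s) ≤ s := by linarith [add_one_le_exp (-s)]
      _ ≤ s ^ (1 - ρ) := self_le_rpow_of_le_one hs hs1 (by linarith)
  · calc 1 - exp (-s) ≤ 1 := by linarith [exp_pos (-s)]
      _ ≤ s ^ (1 - ρ) := one_le_rpow hs1 (by linarith)

theorem rpow_mul_one_sub_exp_neg_div_le {c T ρ : ℝ} (hc : 0 < c) (hT : 0 ≤ T) (hρ0 : 0 ≤ ρ)
    (hρ1 : ρ ≤ 1) : c ^ ρ * ((1 - exp (-c * T)) / c) ≤ T ^ (1 - ρ) := by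
  rw [mul_div_assoc', div_le_iff₀ hc, neg_mul]
  calc c ^ ρ * (1 - exp (-(c * T))) ≤ c ^ ρ * (c * T) ^ (1 - ρ) := by
        gcongr
        exact one_sub_exp_neg_le_rpow (by positivity) hρ0 hρ1
    _ = T ^ (1 - ρ) * c := by
        rw [mul_rpow hc.le hT, ← mul_assoc, ← rpow_add hc, add_sub_cancel, rpow_one, mul_comm]

theorem integral_exp_neg_mul {c T : ℝ} (hc : c ≠ 0) :
    ∫ u in (0)..T, exp (-c * u) = (1 - exp (-c * T)) / c := by
  rw [integral_comp_mul_left exp (neg_ne_zero.mpr hc), integral_exp, mul_zero, exp_zero,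
    smul_eq_mul]
  field_simp
  ring

theorem integral_sq_rpow_mul_exp_le {ρ l τ₁ τ₂ : ℝ} (hρ0 : 0 ≤ ρ) (hρ1 : ρ ≤ 1) (hl : 0 < l)
    (hτ : τ₁ ≤ τ₂) :
    ∫ r in τ₁..τ₂, (l ^ (ρ / 2) * exp (-(τ₂ - r) * l)) ^ 2 ≤ (τ₂ - τ₁) ^ (1 - ρ) := by
  have hsq : ∀ u, (l ^ (ρ / 2) * exp (-u * l)) ^ 2 = l ^ ρ * exp (-(2 * l) * u) := fun u => by
    rw [mul_pow, ← rpow_mul_natCast hl.le, ← exp_nat_mul]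
    ring_nf
  calc ∫ r in τ₁..τ₂, (l ^ (ρ / 2) * exp (-(τ₂ - r) * l)) ^ 2
      = ∫ u in (0)..τ₂ - τ₁, (l ^ (ρ / 2) * exp (-u * l)) ^ 2 := by
        simpa using integral_comp_sub_left (a := τ₁) (b := τ₂)
          (fun u => (l ^ (ρ / 2) * exp (-u * l)) ^ 2) τ₂
    _ = l ^ ρ * ((1 - exp (-(2 * l) * (τ₂ - τ₁))) / (2 * l)) := by
        simp_rw [hsq]
        rw [integral_const_mul, integral_exp_neg_mul (by positivity)]
    _ ≤ (2 * l) ^ ρ * ((1 - exp (-(2 * l) * (τ₂ - τ₁))) / (2 * l)) := by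
        gcongr
        · exact div_nonneg (sub_nonneg.mpr (exp_le_one_iff.mpr (by nlinarith))) (by positivity)
        · linarith
    _ ≤ (τ₂ - τ₁) ^ (1 - ρ) :=
        rpow_mul_one_sub_exp_neg_div_le (by positivity) (sub_nonneg.mpr hτ) hρ0 hρ1

theorem stmt_10 (ρ : ℝ) (hρ0 : 0 ≤ ρ) (hρ1 : ρ ≤ 1) :
    ∃ C : ℝ, 0 < C ∧ ∀ (N : ℕ) (E : Type) (_ : NormedAddCommGroup E)
      (_ : InnerProductSpace ℝ E) (b : OrthonormalBasis (Fin N) ℝ E)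
      (lam : Fin N → ℝ), (∀ n, 0 < lam n) → ∀ (τ₁ τ₂ : ℝ), 0 ≤ τ₁ → τ₁ ≤ τ₂ →
      ∀ x : E,
        (∫ r in τ₁..τ₂,
            ‖specOp b (fun n => lam n ^ (ρ / 2) * Real.exp (-(τ₂ - r) * lam n)) x‖ ^ 2)
          ≤ C * (τ₂ - τ₁) ^ (1 - ρ) * ‖x‖ ^ 2 := by
  refine ⟨1, one_pos, fun N E _ _ b lam hlam τ₁ τ₂ _ hτ x => ?_⟩
  rw [one_mul]
  exact integral_norm_specOp_sq_le b (fun n => by fun_prop)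
    (fun n => integral_sq_rpow_mul_exp_le hρ0 hρ1 (hlam n) hτ) x
end
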